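/- In the free group F₂ on α, β, if an element has even word length n = 2r+2 and is a conjugate of some power (αβ)ᵏ with |k| = r+1, then it is one of the four elements (αβ)^(r+1), (βα)^(r+1), (αβ)^(-(r+1)), (βα)^(-(r+1)). -/

import Mathlib

/-!
Let `L` be a cyclically reduced word and `w = W a` a reduced word ending in the letter `a`.
In `W a L a⁻¹ W⁻¹` either nothing cancels, and the conjugate is longer than `L`, or `a⁻¹`
starts `L` or `a` ends it; in the latter cases `a L a⁻¹` is a cyclic rotation of `L`, itself
cyclically reduced, and we induct on `W`. So a conjugate of `mk L` of norm `|L|` is represented by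
a rotation of `L`. The word of `(αβ)^(r+1)` is cyclically reduced of length `2r+2`, and its
rotations are the words of `(αβ)^(r+1)` and `(βα)^(r+1)`; negative exponents follow by inverting.
-/

abbrev F2 := FreeGroup (Fin 2)

def α : F2 := FreeGroup.of 0

def β : F2 := FreeGroup.of 1

open List

section Alternating

variable {γ : Type*}

theorem flatten_replicate_pair_append (x y : γ) (n : ℕ) :
    (replicate n [x, y]).flatten ++ [x] = x :: (replicate n [y, x]).flatten := by
  induction n with
  | zero => rfl
  | succ n ih => simp [replicate_succ, ih]

theorem rotate_one_flatten_replicate_pair (x y : γ) (n : ℕ) :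
    (replicate n [x, y]).flatten.rotate 1 = (replicate n [y, x]).flatten := by
  cases n with
  | zero => rfl
  | succ n => simp [replicate_succ, flatten_replicate_pair_append]

theorem eq_or_eq_of_isRotated_flatten_replicate_pair {x y : γ} {n : ℕ} {l : List γ}
    (h : l ~r (replicate n [x, y]).flatten) :
    l = (replicate n [x, y]).flatten ∨ l = (replicate n [y, x]).flatten := by
  obtain ⟨k, rfl⟩ := h.symm
  clear h
  induction k with
  | zero => simp
  | succ k ih =>
    rw [← rotate_rotate]
    rcases ih with h | h <;> rw [h, rotate_one_flatten_replicate_pair] <;> simp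

end Alternating

namespace FreeGroup
variable {ι : Type*} {L : List (ι × Bool)}

@[simp]
theorem invRev_singleton (a : ι × Bool) : invRev [a] = [(a.1, !a.2)] := rfl

theorem IsReduced.invRev (h : IsReduced L) : IsReduced (invRev L) := by
  rw [IsReduced, FreeGroup.invRev, isChain_reverse, isChain_map]
  exact h.imp fun x y hxy h1 => by simpa using (hxy h1.symm).symm

theorem IsReduced.norm_mk [DecidableEq ι] (h : IsReduced L) : norm (mk L) = L.length := by
  rw [norm, toWord_mk, h.reduce_eq]

theorem IsCyclicallyReduced.append_singleton {a : ι × Bool} (h : IsCyclicallyReduced (a :: L)) :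
    IsCyclicallyReduced (L ++ [a]) := by
  rcases L.eq_nil_or_concat' with rfl | ⟨M, b, rfl⟩
  · simp
  obtain ⟨hred, hba⟩ := isCyclicallyReduced_cons_append_iff.1 h
  rcases M with _ | ⟨c, M⟩
  · show IsCyclicallyReduced (b :: [] ++ [a])
    rw [isCyclicallyReduced_cons_append_iff]
    simp_all
  show IsCyclicallyReduced (c :: (M ++ [b]) ++ [a])
  rw [isCyclicallyReduced_cons_append_iff]
  refine ⟨IsReduced.append_overlap (L₁ := c :: M) (hred.infix ⟨[a], [], by simp⟩) ?_ (by simp), ?_⟩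
  · simpa using hba
  · exact (isReduced_cons_cons.1 hred).1

theorem IsCyclicallyReduced.isRotated {L' : List (ι × Bool)} (h : IsCyclicallyReduced L)
    (hL : L ~r L') : IsCyclicallyReduced L' := by
  obtain ⟨n, rfl⟩ := hL
  induction n with
  | zero => simpa
  | succ n ih =>
    rw [← rotate_rotate]
    rcases hrot : L.rotate n with _ | ⟨a, M⟩
    · simp
    · rw [hrot] at ih
      simpa using ih.append_singleton

theorem isReduced_pair_iff {x y : ι × Bool} : IsReduced [x, y] ↔ y ≠ (x.1, !x.2) := by
  obtain ⟨x, b⟩ := x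
  obtain ⟨y, c⟩ := y
  cases b <;> cases c <;> simp [eq_comm]

theorem isReduced_or_exists_isRotated (hL : IsCyclicallyReduced L) (a : ι × Bool) :
    IsReduced (a :: L ++ [(a.1, !a.2)]) ∨
      ∃ L', L' ~r L ∧ mk [a] * mk L * (mk [a])⁻¹ = mk L' := by
  have hinv : (mk [a])⁻¹ = mk [(a.1, !a.2)] := by rw [inv_mk, invRev_singleton]
  by_cases hhead : ∃ M, L = (a.1, !a.2) :: M
  · obtain ⟨M, rfl⟩ := hhead
    refine .inr ⟨M ++ [(a.1, !a.2)], isRotated_concat _ _, ?_⟩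
    have hcancel : mk ((a.1, !a.2) :: M) = (mk [a])⁻¹ * mk M := by rw [hinv, mul_mk]; rfl
    rw [hcancel, ← mul_mk, ← hinv]
    group
  by_cases hlast : ∃ M, L = M ++ [a]
  · obtain ⟨M, rfl⟩ := hlast
    refine .inr ⟨a :: M, (isRotated_concat _ _).symm, ?_⟩
    rw [← mul_mk, show a :: M = [a] ++ M from rfl, ← mul_mk]
    group
  rcases L.eq_nil_or_concat' with rfl | ⟨N, c, rfl⟩
  · exact .inr ⟨[], .refl _, by rw [← one_eq_mk, mul_one, mul_inv_cancel]⟩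
  left
  obtain ⟨b, M, hbM⟩ := exists_cons_of_ne_nil (append_ne_nil_of_right_ne_nil N (cons_ne_nil c []))
  have hab : IsReduced [a, b] := isReduced_pair_iff.2 fun h => hhead ⟨M, h ▸ hbM⟩
  have hca : IsReduced [c, (a.1, !a.2)] := isReduced_pair_iff.2 fun h => hlast
    ⟨N, by rw [show c = a by simpa [Prod.ext_iff, eq_comm] using h]⟩
  have hfirst : IsReduced (a :: (N ++ [c])) := by
    rw [hbM]
    exact isReduced_cons_cons.2 ⟨isReduced_cons_cons.1 hab |>.1, hbM ▸ hL.isReduced⟩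
  exact IsReduced.append_overlap (L₁ := [a]) hfirst
    (IsReduced.append_overlap hL.isReduced hca (cons_ne_nil c [])) (by simp)

theorem isReduced_append_append_invRev {W : List (ι × Bool)} {a : ι × Bool}
    (hW : IsReduced (W ++ [a])) (ha : IsReduced (a :: L ++ [(a.1, !a.2)])) :
    IsReduced (W ++ [a] ++ L ++ invRev (W ++ [a])) := by
  have hleft : IsReduced (W ++ [a] ++ (L ++ [(a.1, !a.2)])) :=
    hW.append_overlap ha (cons_ne_nil a [])
  have hright : IsReduced ([(a.1, !a.2)] ++ invRev W) := by
    simpa [invRev_append] using IsReduced.invRev hW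
  rw [invRev_append, invRev_singleton, ← append_assoc]
  exact IsReduced.append_overlap (by simpa using hleft) hright (cons_ne_nil _ [])

theorem exists_isRotated_of_norm_conj_eq [DecidableEq ι] (hL : IsCyclicallyReduced L)
    (w : FreeGroup ι) (h : norm (w * mk L * w⁻¹) = L.length) :
    ∃ L', L' ~r L ∧ w * mk L * w⁻¹ = mk L' := by
  obtain ⟨W, hW, rfl⟩ : ∃ W, IsReduced W ∧ mk W = w := ⟨w.toWord, isReduced_toWord, mk_toWord⟩
  induction W using List.reverseRecOn generalizing L with
  | nil => exact ⟨L, .refl L, by simp [← one_eq_mk]⟩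
  | append_singleton W a ih =>
    rcases isReduced_or_exists_isRotated hL a with hred | ⟨L', hrot, hconj⟩
    · have hword : mk (W ++ [a]) * mk L * (mk (W ++ [a]))⁻¹ =
          mk (W ++ [a] ++ L ++ invRev (W ++ [a])) := by rw [inv_mk, mul_mk, mul_mk]
      rw [hword, (isReduced_append_append_invRev hW hred).norm_mk] at h
      simp only [length_append, invRev_length, length_singleton] at h
      omega
    · have hsplit : mk (W ++ [a]) * mk L * (mk (W ++ [a]))⁻¹ =
          mk W * (mk [a] * mk L * (mk [a])⁻¹) * (mk W)⁻¹ := by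
        rw [← mul_mk]; group
      rw [hsplit, hconj] at h ⊢
      obtain ⟨L'', hrot', heq⟩ := ih (hL.isRotated hrot.symm) (IsReduced.infix hW ⟨[], [a], by simp⟩)
        (by rw [h, hrot.perm.length_eq])
      exact ⟨L'', hrot'.trans hrot, heq⟩

theorem mk_flatten_replicate_pair (a b : ι) (n : ℕ) :
    mk (replicate n [(a, true), (b, true)]).flatten = (of a * of b) ^ n := by
  rw [← pow_mk]; rfl

theorem isCyclicallyReduced_flatten_replicate_pair (a b : ι) (n : ℕ) :
    IsCyclicallyReduced (replicate n [(a, true), (b, true)]).flatten :=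
  IsCyclicallyReduced.flatten_replicate (by simp [isCyclicallyReduced_iff]) n

theorem conj_pow_of_mul_of_eq_or_of_norm_eq [DecidableEq ι] (a b : ι) (w : FreeGroup ι) (n : ℕ)
    (h : norm (w * (of a * of b) ^ n * w⁻¹) = 2 * n) :
    w * (of a * of b) ^ n * w⁻¹ = (of a * of b) ^ n ∨
      w * (of a * of b) ^ n * w⁻¹ = (of b * of a) ^ n := by
  simp only [← mk_flatten_replicate_pair] at h ⊢
  obtain ⟨L, hrot, hconj⟩ := exists_isRotated_of_norm_conj_eq
    (isCyclicallyReduced_flatten_replicate_pair a b n) w (by rw [h]; simp [mul_comm])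
  rw [hconj]
  rcases eq_or_eq_of_isRotated_flatten_replicate_pair hrot with rfl | rfl
  · exact .inl rfl
  · exact .inr rfl

end FreeGroup

/-- If `g` has word length `2r+2` and is a conjugate of `(αβ)ᵏ` with `|k| = r+1`,
then `g` is one of `(αβ)^(r+1)`, `(βα)^(r+1)`, `(αβ)^-(r+1)`, `(βα)^-(r+1)`. -/
theorem max_power_conjugates (r : ℕ) (g : F2)
    (hnorm : FreeGroup.norm g = 2 * r + 2)
    (hconj : ∃ (w : F2) (k : ℤ), k.natAbs = r + 1 ∧ g = w * (α * β) ^ k * w⁻¹) :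
    g = (α * β) ^ (r + 1) ∨ g = (β * α) ^ (r + 1) ∨
      g = ((α * β) ^ (r + 1))⁻¹ ∨ g = ((β * α) ^ (r + 1))⁻¹ := by
  obtain ⟨w, k, hk, rfl⟩ := hconj
  have hcyclic : FreeGroup.norm (w * (α * β) ^ (r + 1) * w⁻¹) = 2 * r + 2 →
      w * (α * β) ^ (r + 1) * w⁻¹ = (α * β) ^ (r + 1) ∨
        w * (α * β) ^ (r + 1) * w⁻¹ = (β * α) ^ (r + 1) :=
    FreeGroup.conj_pow_of_mul_of_eq_or_of_norm_eq 0 1 w (r + 1)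
  rcases Int.natAbs_eq k with hk' | hk' <;> rw [hk', hk] at hnorm ⊢
  · rw [zpow_natCast] at hnorm ⊢
    rcases hcyclic hnorm with h | h
    exacts [.inl h, .inr (.inl h)]
  · rw [zpow_neg, zpow_natCast, ← conj_inv] at hnorm ⊢
    rw [FreeGroup.norm_inv_eq] at hnorm
    rcases hcyclic hnorm with h | h <;> rw [h]
    exacts [.inr (.inr (.inl rfl)), .inr (.inr (.inr rfl))]
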